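/- Let V be a vector space over 𝔽₂ of finite positive dimension endowed with a symplectic form B. Let S be a linearly dependent spanning set of V such that G(S) is isomorphic to the line graph of a tree Υ (via an identification of S with the edge set of Υ). Then: (i) the radical of V is zero; (ii) the dimension of V is even; and (iii) for each pendant edge β of Υ, the set S \ {β} is a basis of V. -/

import Mathlib

/-!
For coefficients `c : S → 𝔽₂`, the form pairs `∑ c α • α` with the vector on the edge `ab` as
`∂c(a) + ∂c(b)`, where `∂` is the mod-2 boundary map of `Υ`. So `∑ c α • α` lies in the
radical exactly when `∂c` is constant. On a tree `∂` is injective, hence the only such `c` are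
`0` and the unique `c₀` with `∂c₀ = 1`, which exists because `S` is dependent. This gives the
trivial radical, the kernel `{0, c₀}` of `c ↦ ∑ c α • α`, so `dim V = |S| - 1 = |W| - 2`, and
`|W|` even by the handshake lemma for `c₀`. A pendant edge at a leaf `u` has
`c₀(β) = ∂c₀(u) = 1`, so `β` lies in the span of the others, and `S \ {β}` is a basis by counting.
-/

open Module

/-- The transvection with direction `α`, as a linear automorphism of `V`
(over `𝔽₂`, for an alternating form `B` it is an involution). -/
def transvection {V : Type} [AddCommGroup V] [Module (ZMod 2) V]
    (B : LinearMap.BilinForm (ZMod 2) V) (hB : ∀ v, B v v = 0) (α : V) :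
    V ≃ₗ[ZMod 2] V :=
  letI f : V →ₗ[ZMod 2] V :=
    { toFun := fun β => β + B β α • α
      map_add' := fun β γ => by
        simp only [map_add, LinearMap.add_apply, add_smul]
        abel
      map_smul' := fun c β => by
        simp only [map_smul, LinearMap.smul_apply, smul_eq_mul, RingHom.id_apply, smul_add,
          smul_smul] }
  haveI key : ∀ β, f (f β) = β := by
    intro β
    show (β + B β α • α) + B (β + B β α • α) α • α = β
    have h1 : B (β + B β α • α) α = B β α := by
      simp [map_add, hB α, LinearMap.add_apply, LinearMap.smul_apply]
    rw [h1]
    have h2 : B β α • α + B β α • α = (0 : V) := by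
      rw [← add_smul]
      have : B β α + B β α = 0 := by
        have : (2 : ZMod 2) = 0 := by decide
        calc B β α + B β α = 2 * B β α := by ring
        _ = 0 := by rw [this]; ring
      rw [this, zero_smul]
    rw [add_assoc, h2, add_zero]
  LinearEquiv.ofLinear f f (by ext β; exact key β) (by ext β; exact key β)

/-- the subgroup `Tv(S)` generated by the transvections with directions in `S`. -/
def Tv {V : Type} [AddCommGroup V] [Module (ZMod 2) V]
    (B : LinearMap.BilinForm (ZMod 2) V) (hB : ∀ v, B v v = 0) (S : Set V) :
    Subgroup (V ≃ₗ[ZMod 2] V) :=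
  Subgroup.closure ((fun α => transvection B hB α) '' S)

/-- The graph `G(S)`: vertex set `S`, with `α, β` adjacent iff `B α β = 1`. -/
def graphOf {V : Type} [AddCommGroup V] [Module (ZMod 2) V]
    (B : LinearMap.BilinForm (ZMod 2) V) (hB : ∀ v, B v v = 0) (S : Set V) :
    SimpleGraph S where
  Adj a b := B a b = 1
  symm := by
    constructor
    intro a b hab
    have h := hB ((a : V) + b)
    simp only [map_add, LinearMap.add_apply, hB] at h
    -- h : B b a + B a b = 0 (after simp of diagonal terms)
    have h' : B (b : V) a + B (a : V) b = 0 := by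
      simpa [hB] using h
    have : B (b : V) a = B (a : V) b := by
      have := eq_neg_of_add_eq_zero_left h'
      rwa [CharTwo.neg_eq] at this
    rw [this]; exact hab
  loopless := by
    constructor
    intro a h
    rw [hB] at h
    exact zero_ne_one h

/-- number of connected components of a graph. -/
noncomputable def numComponents {α : Type} (G : SimpleGraph α) : ℕ :=
  Nat.card G.ConnectedComponent

/-- A cut-vertex: a vertex whose deletion increases the number of components. -/
noncomputable def IsCutVertex {α : Type} (G : SimpleGraph α) (u : α) : Prop :=
  numComponents G < numComponents (G.induce {v | v ≠ u})

/-- A block: a maximal (vertex set of a) connected induced subgraph having no cut-vertex. -/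
noncomputable def IsBlock {α : Type} (G : SimpleGraph α) (A : Set α) : Prop :=
  ((G.induce A).Connected ∧ ∀ u, ¬ IsCutVertex (G.induce A) u) ∧
    ∀ A' : Set α, A ⊆ A' → ((G.induce A').Connected ∧ ∀ u, ¬ IsCutVertex (G.induce A') u) →
      A' = A

/-- A block graph: a connected graph all of whose blocks are complete. -/
noncomputable def IsBlockGraph {α : Type} (G : SimpleGraph α) : Prop :=
  G.Connected ∧ ∀ A : Set α, IsBlock G A → A.Pairwise G.Adj

/-- Claw-free: no induced subgraph isomorphic to `K_{1,3}`. -/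
def ClawFree {α : Type} (G : SimpleGraph α) : Prop :=
  IsEmpty (completeBipartiteGraph (Fin 1) (Fin 3) ↪g G)

/-- `G` is (isomorphic to) the line graph of a tree. -/
def IsLineGraphOfTree {α : Type} (G : SimpleGraph α) : Prop :=
  ∃ (W : Type) (T : SimpleGraph W), T.IsTree ∧ Nonempty (G ≃g T.lineGraph)

/-- A path graph: a tree in which every vertex has degree at most two. -/
def IsPathGraph {α : Type} (G : SimpleGraph α) : Prop :=
  G.IsTree ∧ ∀ v a b c : α, G.Adj v a → G.Adj v b → G.Adj v c → a = b ∨ a = c ∨ b = c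

/-- The relation `𝓘₀` on linearly independent subsets of `V`. -/
def IRelZero {V : Type} [AddCommGroup V] [Module (ZMod 2) V]
    (B : LinearMap.BilinForm (ZMod 2) V) (hB : ∀ v, B v v = 0) (S S' : Set V) : Prop :=
  LinearIndependent (ZMod 2) ((↑) : S → V) ∧ LinearIndependent (ZMod 2) ((↑) : S' → V) ∧
    ∃ α ∈ S, ∃ β ∈ S, S' = insert (transvection B hB α β) (S \ {β})

/-- The equivalence relation `𝓘` generated by `𝓘₀`. -/
def IRel {V : Type} [AddCommGroup V] [Module (ZMod 2) V]
    (B : LinearMap.BilinForm (ZMod 2) V) (hB : ∀ v, B v v = 0) : Set V → Set V → Prop :=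
  Relation.EqvGen (IRelZero B hB)

lemma ZMod.eq_zero_or_eq_one : ∀ x : ZMod 2, x = 0 ∨ x = 1 := by decide

lemma Finset.sum_ite_mem_sym2_mk {W R : Type*} [DecidableEq W] [AddCommMonoidWithOne R]
    (P : Finset W) {a b : W} (hab : a ≠ b) :
    ∑ w ∈ P, (if w ∈ s(a, b) then (1 : R) else 0) =
      (if a ∈ P then 1 else 0) + (if b ∈ P then 1 else 0) := by
  have hsplit : ∀ w, (if w ∈ s(a, b) then (1 : R) else 0) =
      (if a = w then 1 else 0) + (if b = w then 1 else 0) := by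
    intro w
    by_cases hwa : a = w <;> by_cases hwb : b = w <;> simp_all [Sym2.mem_iff, eq_comm]
  simp only [hsplit, Finset.sum_add_distrib, Finset.sum_ite_eq]

namespace SimpleGraph

variable {W : Type*} {G : SimpleGraph W}

lemma Preconnected.apply_eq_of_forall_adj {α : Type*} (hG : G.Preconnected) {f : W → α}
    (hf : ∀ a b, G.Adj a b → f a = f b) (u v : W) : f u = f v := by
  obtain ⟨p⟩ := hG u v
  induction p with
  | nil => rfl
  | cons h _ ih => exact (hf _ _ h).trans ih

lemma Preconnected.finite_of_finite_edgeSet [Finite G.edgeSet] (hG : G.Preconnected) :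
    Finite W := by
  classical
  rcases subsingleton_or_nontrivial W with _ | _
  · exact Finite.of_subsingleton
  have hcover : (Set.univ : Set W) ⊆ ⋃ f : G.edgeSet, ((f : Sym2 W).toFinset : Set W) := by
    rw [← hG.support_eq_univ]
    rintro u ⟨w, huw⟩
    exact Set.mem_iUnion.2 ⟨⟨s(u, w), huw⟩, Sym2.mem_toFinset.2 (Sym2.mem_mk_left u w)⟩
  exact Set.finite_univ_iff.1 ((Set.finite_iUnion fun f => Finset.finite_toSet _).subset hcover)

variable [DecidableEq W]

lemma sum_ite_mem_edge (P : Finset W) (f : G.edgeSet) :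
    ∃ a b, G.Adj a b ∧ (f : Sym2 W) = s(a, b) ∧
      ∑ w ∈ P, (if w ∈ (f : Sym2 W) then (1 : ZMod 2) else 0) =
        (if a ∈ P then 1 else 0) + (if b ∈ P then 1 else 0) := by
  obtain ⟨f, hf⟩ := f
  induction f using Sym2.ind with
  | h a b =>
    have hab : G.Adj a b := G.mem_edgeSet.1 hf
    exact ⟨a, b, hab, rfl, Finset.sum_ite_mem_sym2_mk P hab.ne⟩

variable [Fintype G.edgeSet]

/-- The mod-2 boundary map `C₁(G; 𝔽₂) → C₀(G; 𝔽₂)` of the graph. -/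
def edgeBoundary (c : G.edgeSet → ZMod 2) (u : W) : ZMod 2 :=
  ∑ f : G.edgeSet, if u ∈ (f : Sym2 W) then c f else 0

@[simp]
lemma edgeBoundary_zero : G.edgeBoundary 0 = 0 := by
  ext u
  simp [edgeBoundary]

lemma sum_edgeBoundary (P : Finset W) (c : G.edgeSet → ZMod 2) :
    ∑ w ∈ P, G.edgeBoundary c w =
      ∑ f, c f * ∑ w ∈ P, if w ∈ (f : Sym2 W) then 1 else 0 := by
  simp only [edgeBoundary, Finset.mul_sum, mul_ite, mul_one, mul_zero]
  exact Finset.sum_comm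

lemma sum_edgeBoundary_univ [Fintype W] (c : G.edgeSet → ZMod 2) :
    ∑ w, G.edgeBoundary c w = 0 := by
  rw [sum_edgeBoundary]
  refine Finset.sum_eq_zero fun f _ => ?_
  obtain ⟨a, b, -, -, hsum⟩ := G.sum_ite_mem_edge Finset.univ f
  rw [hsum]
  simp only [Finset.mem_univ, if_true, CharTwo.add_self_eq_zero, mul_zero]

lemma even_card_of_edgeBoundary_eq_one [Fintype W] {c : G.edgeSet → ZMod 2}
    (hc : G.edgeBoundary c = 1) : Even (Fintype.card W) := by
  have h := G.sum_edgeBoundary_univ c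
  simp only [hc, Pi.one_apply, Finset.sum_const, Finset.card_univ, nsmul_eq_mul, mul_one] at h
  exact ZMod.natCast_eq_zero_iff_even.1 h

/-- In a forest, the coefficient of an edge `xy` is the total boundary on the side of `y`
in `G - xy`: every other edge has both or no endpoints on that side. -/
lemma IsAcyclic.exists_sum_edgeBoundary_eq [Fintype W] (hG : G.IsAcyclic) {x y : W}
    (hxy : G.Adj x y) : ∃ P : Finset W, ∀ c, ∑ w ∈ P, G.edgeBoundary c w = c ⟨s(x, y), hxy⟩ := by
  classical
  set H := G.deleteEdges {s(x, y)}
  have hbridge : ¬ H.Reachable y x := by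
    have := isAcyclic_iff_forall_adj_isBridge.1 hG hxy.symm
    rwa [isBridge_iff, Sym2.eq_swap] at this
  refine ⟨Finset.univ.filter (H.Reachable y), fun c => ?_⟩
  rw [sum_edgeBoundary, Fintype.sum_eq_single ⟨s(x, y), hxy⟩]
  · rw [Finset.sum_ite_mem_sym2_mk _ hxy.ne]
    simp [hbridge]
  · intro g hg
    obtain ⟨a, b, hab, hgab, hsum⟩ := G.sum_ite_mem_edge (Finset.univ.filter (H.Reachable y)) g
    have hHab : H.Adj a b := by
      rw [deleteEdges_adj, Set.mem_singleton_iff, ← hgab]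
      exact ⟨hab, fun h => hg (Subtype.ext h)⟩
    have hiff : H.Reachable y a ↔ H.Reachable y b :=
      ⟨fun h => h.trans hHab.reachable, fun h => h.trans hHab.symm.reachable⟩
    rw [hsum]
    by_cases ha : H.Reachable y a
    · simp [ha, hiff.1 ha, CharTwo.add_self_eq_zero]
    · simp [ha, mt hiff.2 ha]

lemma IsAcyclic.edgeBoundary_injective [Fintype W] (hG : G.IsAcyclic) :
    Function.Injective G.edgeBoundary := by
  intro c c' h
  funext ⟨f, hf⟩
  induction f using Sym2.ind with
  | h x y =>
    obtain ⟨P, hP⟩ := hG.exists_sum_edgeBoundary_eq (G.mem_edgeSet.1 hf)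
    rw [← hP c, ← hP c', h]

lemma edgeBoundary_eq_of_neighborSet_subsingleton (c : G.edgeSet → ZMod 2) {u : W}
    {f : G.edgeSet} (hu : u ∈ (f : Sym2 W)) (hleaf : (G.neighborSet u).Subsingleton) :
    G.edgeBoundary c u = c f := by
  rw [edgeBoundary, Fintype.sum_eq_single f]
  · exact if_pos hu
  · intro g hg
    refine if_neg fun hug => hg (Subtype.ext ?_)
    obtain ⟨w, hw⟩ := Sym2.mem_iff_exists.1 hug
    obtain ⟨w', hw'⟩ := Sym2.mem_iff_exists.1 hu
    have hadj : G.Adj u w := G.mem_edgeSet.1 (hw ▸ g.2)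
    have hadj' : G.Adj u w' := G.mem_edgeSet.1 (hw' ▸ f.2)
    rw [hw, hw', hleaf hadj hadj']

end SimpleGraph

lemma Submodule.span_diff_singleton_eq_of_sum_smul_eq_zero {K V : Type*} [DivisionRing K]
    [AddCommGroup V] [Module K V] {S : Set V} [Fintype S] {c : S → K}
    (hc : ∑ α, c α • (α : V) = 0) {β : S} (hβ : c β ≠ 0) :
    span K (S \ {(β : V)}) = span K S := by
  classical
  refine le_antisymm (span_mono Set.sdiff_subset) (span_le.2 fun x hx => ?_)
  by_cases hxβ : x = β
  · rw [← Finset.add_sum_erase _ _ (Finset.mem_univ β)] at hc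
    have hβeq : (β : V) = (c β)⁻¹ • -∑ α ∈ Finset.univ.erase β, c α • (α : V) := by
      rw [← eq_neg_of_add_eq_zero_left hc, inv_smul_smul₀ hβ]
    have hmem : (c β)⁻¹ • -∑ α ∈ Finset.univ.erase β, c α • (α : V) ∈ span K (S \ {(β : V)}) :=
      smul_mem _ _ (neg_mem (sum_mem fun α hα => smul_mem _ _ (subset_span
        ⟨α.2, fun h => Finset.ne_of_mem_erase hα (Subtype.ext h)⟩)))
    rw [← hβeq] at hmem
    exact hxβ ▸ hmem
  · exact subset_span ⟨hx, hxβ⟩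

lemma finrank_add_one_eq_card_of_ker_eq_span_singleton {K V : Type*} [Field K] [AddCommGroup V]
    [Module K V] {S : Set V} [Fintype S] (hspan : Submodule.span K S = ⊤) {c₀ : S → K}
    (hc₀ : c₀ ≠ 0) (hsum : ∑ α, c₀ α • (α : V) = 0)
    (hker : ∀ c : S → K, ∑ α, c α • (α : V) = 0 → c ∈ K ∙ c₀) :
    finrank K V + 1 = Fintype.card S := by
  set φ := Fintype.linearCombination K ((↑) : S → V)
  have hrange : LinearMap.range φ = ⊤ := by
    rw [Fintype.range_linearCombination, Subtype.range_coe, hspan]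
  have hker' : LinearMap.ker φ = K ∙ c₀ := by
    refine le_antisymm (fun c hc => hker c ?_) ((Submodule.span_singleton_le_iff_mem _ _).2 ?_)
    · simpa [φ, Fintype.linearCombination_apply] using hc
    · simpa [φ, Fintype.linearCombination_apply] using hsum
  have := LinearMap.finrank_range_add_finrank_ker φ
  rwa [hrange, finrank_top, hker', finrank_span_singleton hc₀,
    Module.finrank_fintype_fun_eq_card] at this

section LineGraphOfTree

open SimpleGraph

variable {V W : Type*} [AddCommGroup V] [Module (ZMod 2) V] {B : LinearMap.BilinForm (ZMod 2) V}
  {S : Set V} {G : SimpleGraph W} {e : S ≃ G.edgeSet}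

def IsLineGraphLabelling (B : LinearMap.BilinForm (ZMod 2) V) (e : S ≃ G.edgeSet) : Prop :=
  ∀ a b : S, a ≠ b → (B a b = 1 ↔ ∃ u, u ∈ (e a : Sym2 W) ∧ u ∈ (e b : Sym2 W))

variable [DecidableEq W]

lemma apply_eq_ite_add_ite (hB : ∀ v, B v v = 0) (he : IsLineGraphLabelling B e)
    (α : S) {β : S} {a b : W} (hβ : (e β : Sym2 W) = s(a, b)) :
    B α β = (if a ∈ (e α : Sym2 W) then 1 else 0) + (if b ∈ (e α : Sym2 W) then 1 else 0) := by
  have hab : a ≠ b := (G.mem_edgeSet.1 (hβ ▸ (e β).2)).ne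
  by_cases hαβ : α = β
  · subst hαβ
    simp [hβ, hB, CharTwo.add_self_eq_zero]
  have hshare : B α β = 1 ↔ a ∈ (e α : Sym2 W) ∨ b ∈ (e α : Sym2 W) := by
    rw [he α β hαβ, hβ]
    simp [Sym2.mem_iff, and_or_left, exists_or]
  have hnot : ¬ (a ∈ (e α : Sym2 W) ∧ b ∈ (e α : Sym2 W)) := fun h =>
    hαβ (e.injective (Subtype.ext (((Sym2.mem_and_mem_iff hab).1 h).trans hβ.symm)))
  rcases ZMod.eq_zero_or_eq_one (B α β) with h | h <;>
    by_cases ha : a ∈ (e α : Sym2 W) <;> by_cases hb : b ∈ (e α : Sym2 W) <;> simp_all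

variable [Fintype S] [Fintype G.edgeSet]

lemma apply_sum_smul_eq_edgeBoundary_add (hB : ∀ v, B v v = 0) (he : IsLineGraphLabelling B e)
    (c : S → ZMod 2) {β : S} {a b : W} (hβ : (e β : Sym2 W) = s(a, b)) :
    B (∑ α, c α • (α : V)) β =
      G.edgeBoundary (c ∘ e.symm) a + G.edgeBoundary (c ∘ e.symm) b := by
  have hreindex : ∀ u, G.edgeBoundary (c ∘ e.symm) u =
      ∑ α, if u ∈ (e α : Sym2 W) then c α else 0 := fun u => by
    rw [edgeBoundary, ← e.sum_comp]
    simp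
  simp only [map_sum, map_smul, LinearMap.sum_apply, LinearMap.smul_apply, smul_eq_mul,
    apply_eq_ite_add_ite hB he _ hβ, hreindex, ← Finset.sum_add_distrib, mul_add, mul_ite,
    mul_one, mul_zero]

lemma edgeBoundary_eq_zero_or_eq_one (hB : ∀ v, B v v = 0) (he : IsLineGraphLabelling B e)
    (hG : G.Preconnected) {c : S → ZMod 2} (hc : ∀ β : S, B (∑ α, c α • (α : V)) β = 0) :
    G.edgeBoundary (c ∘ e.symm) = 0 ∨ G.edgeBoundary (c ∘ e.symm) = 1 := by
  have hconst := hG.apply_eq_of_forall_adj (f := G.edgeBoundary (c ∘ e.symm)) fun a b hab => by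
    have h := apply_sum_smul_eq_edgeBoundary_add hB he c
      (congrArg Subtype.val (e.apply_symm_apply ⟨s(a, b), hab⟩))
    rwa [hc, eq_comm, CharTwo.add_eq_zero] at h
  rcases isEmpty_or_nonempty W with _ | ⟨⟨w₀⟩⟩
  · exact .inl (funext isEmptyElim)
  · refine (ZMod.eq_zero_or_eq_one (G.edgeBoundary (c ∘ e.symm) w₀)).imp ?_ ?_ <;>
      exact fun h => funext fun u => (hconst u w₀).trans h

variable [Fintype W]

lemma eq_zero_or_eq_of_forall_apply_sum_smul_eq_zero (hB : ∀ v, B v v = 0)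
    (he : IsLineGraphLabelling B e) (hG : G.IsTree) {c₀ c : S → ZMod 2}
    (hc₀ : G.edgeBoundary (c₀ ∘ e.symm) = 1)
    (hc : ∀ β : S, B (∑ α, c α • (α : V)) β = 0) : c = 0 ∨ c = c₀ := by
  have hinj : Function.Injective fun c : S → ZMod 2 => G.edgeBoundary (c ∘ e.symm) :=
    hG.isAcyclic.edgeBoundary_injective.comp e.symm.surjective.injective_comp_right
  refine (edgeBoundary_eq_zero_or_eq_one hB he hG.connected.preconnected hc).imp
    (fun h => hinj ?_) (fun h => hinj (h.trans hc₀.symm))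
  simpa using h

lemma exists_sum_smul_eq_zero_edgeBoundary_eq_one (hB : ∀ v, B v v = 0)
    (he : IsLineGraphLabelling B e) (hG : G.IsTree)
    (hdep : ¬ LinearIndependent (ZMod 2) ((↑) : S → V)) :
    ∃ c₀ : S → ZMod 2, c₀ ≠ 0 ∧ ∑ α, c₀ α • (α : V) = 0 ∧ G.edgeBoundary (c₀ ∘ e.symm) = 1 := by
  obtain ⟨c₀, hsum, α, hα⟩ := Fintype.not_linearIndependent_iff.1 hdep
  have hc₀ : c₀ ≠ 0 := fun h => hα (congrFun h α)
  refine ⟨c₀, hc₀, hsum, ?_⟩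
  refine (edgeBoundary_eq_zero_or_eq_one hB he hG.connected.preconnected
    (by simp [hsum])).resolve_left fun h => hc₀ ?_
  exact e.symm.surjective.injective_comp_right
    (hG.isAcyclic.edgeBoundary_injective (by simpa using h))

end LineGraphOfTree

theorem stmt10_general {V W : Type} [AddCommGroup V] [Module (ZMod 2) V] [FiniteDimensional (ZMod 2) V]
    (B : LinearMap.BilinForm (ZMod 2) V) (hB : ∀ v, B v v = 0)
    (S : Set V) (hdep : ¬ LinearIndependent (ZMod 2) ((↑) : S → V))
    (hspan : Submodule.span (ZMod 2) S = ⊤)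
    (Υ : SimpleGraph W) (hΥ : Υ.IsTree)
    (e : S ≃ Υ.edgeSet)
    (he : ∀ a b : S, a ≠ b →
      ((B (a : V) (b : V) = 1) ↔ ∃ u : W, u ∈ (e a : Sym2 W) ∧ u ∈ (e b : Sym2 W))) :
    (∀ v : V, (∀ w, B v w = 0) → v = 0) ∧
      Even (Module.finrank (ZMod 2) V) ∧
      ∀ β : S, (∃ u ∈ (e β : Sym2 W), ∀ w₁ w₂ : W, Υ.Adj u w₁ → Υ.Adj u w₂ → w₁ = w₂) →
        LinearIndependent (ZMod 2) ((↑) : (S \ {(β : V)} : Set V) → V) ∧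
          Submodule.span (ZMod 2) (S \ {(β : V)}) = ⊤ := by
  classical
  have : Finite V := Module.finite_of_finite (ZMod 2)
  have : Fintype S := Fintype.ofFinite S
  have : Fintype Υ.edgeSet := Fintype.ofEquiv S e
  have : Fintype W := @Fintype.ofFinite W hΥ.connected.preconnected.finite_of_finite_edgeSet
  obtain ⟨c₀, hc₀, hsum, hbd⟩ := exists_sum_smul_eq_zero_edgeBoundary_eq_one hB he hΥ hdep
  have hker (c : S → ZMod 2) (hc : ∀ β : S, B (∑ α, c α • (α : V)) β = 0) : c = 0 ∨ c = c₀ :=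
    eq_zero_or_eq_of_forall_apply_sum_smul_eq_zero hB he hΥ hbd hc
  have hrank : finrank (ZMod 2) V + 1 = Fintype.card S :=
    finrank_add_one_eq_card_of_ker_eq_span_singleton hspan hc₀ hsum fun c hc => by
      rcases hker c (by simp [hc]) with rfl | rfl
      exacts [Submodule.zero_mem _, Submodule.mem_span_singleton_self _]
  refine ⟨fun v hv => ?_, ?_, fun β ⟨u, hu, hleaf⟩ => ?_⟩
  · obtain ⟨c, rfl⟩ := (Submodule.mem_span_range_iff_exists_fun (ZMod 2)).1
      (by rw [Subtype.range_coe, hspan]; trivial : v ∈ _)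
    rcases hker c fun β => hv β with rfl | rfl
    exacts [by simp, hsum]
  · have hcard := hΥ.card_edgeFinset
    rw [SimpleGraph.edgeFinset_card, ← Fintype.card_congr e, ← hrank] at hcard
    obtain ⟨k, hk⟩ := Υ.even_card_of_edgeBoundary_eq_one hbd
    exact ⟨k - 1, by omega⟩
  · have hβ : c₀ β = 1 := by
      simpa [hbd] using (Υ.edgeBoundary_eq_of_neighborSet_subsingleton (c₀ ∘ e.symm) hu
        fun w₁ h₁ w₂ h₂ => hleaf w₁ w₂ h₁ h₂).symm
    have hspan' := (Submodule.span_diff_singleton_eq_of_sum_smul_eq_zero hsum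
      (hβ ▸ one_ne_zero)).trans hspan
    refine ⟨linearIndependent_of_top_le_span_of_card_eq_finrank
      (by rw [Subtype.range_coe, hspan']) ?_, hspan'⟩
    have := Set.ncard_sdiff_singleton_add_one β.2
    rw [Set.fintypeCard_eq_ncard] at hrank ⊢
    omega

/-- if `S` is a linearly dependent spanning set of `V` and `G(S)` is the line
graph of a tree `Υ` via an identification `e` of `S` with the edges of `Υ`, then: (i) the
radical of `V` is zero; (ii) `dim V` is even; (iii) for each pendant edge `β` of `Υ`, the
set `S \ {β}` is a basis of `V`. -/
theorem stmt10 {V W : Type} [AddCommGroup V] [Module (ZMod 2) V] [FiniteDimensional (ZMod 2) V]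
    (hdim : 0 < Module.finrank (ZMod 2) V)
    (B : LinearMap.BilinForm (ZMod 2) V) (hB : ∀ v, B v v = 0)
    (S : Set V) (hdep : ¬ LinearIndependent (ZMod 2) ((↑) : S → V))
    (hspan : Submodule.span (ZMod 2) S = ⊤)
    (Υ : SimpleGraph W) (hΥ : Υ.IsTree)
    (e : S ≃ Υ.edgeSet)
    (he : ∀ a b : S, a ≠ b →
      ((B (a : V) (b : V) = 1) ↔ ∃ u : W, u ∈ (e a : Sym2 W) ∧ u ∈ (e b : Sym2 W))) :
    (∀ v : V, (∀ w, B v w = 0) → v = 0) ∧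
      Even (Module.finrank (ZMod 2) V) ∧
      ∀ β : S, (∃ u ∈ (e β : Sym2 W), ∀ w₁ w₂ : W, Υ.Adj u w₁ → Υ.Adj u w₂ → w₁ = w₂) →
        LinearIndependent (ZMod 2) ((↑) : (S \ {(β : V)} : Set V) → V) ∧
          Submodule.span (ZMod 2) (S \ {(β : V)}) = ⊤ :=
  stmt10_general B hB S hdep hspan Υ hΥ e he
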